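/- arXiv:2209.04603 — 2 statements merged into one kernel-verified Lean document; each statement's English description precedes it below -/
import Mathlib

section
/- Let V be a type, A : V → V → Prop a directed edge relation, and reach the reflexive-transitive closure of A. If S is a nonempty finite subset of V such that for every pair u, v ∈ S either u reaches v or v reaches u, then there exists a nonempty list l of vertices whose consecutive entries are related by the edge relation A (i.e., l is a directed walk in the graph) and which contains every vertex of S. -/
/-!
Reachability is a preorder which, by hypothesis, is total on `S`; sorting `S` along it gives a
list in which each vertex reaches the next. Replacing every consecutive pair of that list by a
directed walk between them yields one walk through all of `S`.
-/

open List Relation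

theorem Finset.exists_list_pairwise_of_total {α : Type*} {r : α → α → Prop} [IsTrans α r]
    (S : Finset α) (hS : ∀ u ∈ S, ∀ v ∈ S, r u v ∨ r v u) :
    ∃ l : List α, l.Pairwise r ∧ ∀ x ∈ S, x ∈ l := by
  classical
  let rS : S → S → Prop := fun u v => r u v
  have : Std.Total rS := ⟨fun u v => hS u u.2 v v.2⟩
  have : IsTrans S rS := ⟨fun _ _ _ => _root_.trans_of r⟩
  refine ⟨(S.attach.toList.insertionSort rS).map Subtype.val,
    pairwise_map.mpr (pairwise_insertionSort rS _), fun x hx => ?_⟩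
  have hx' : (⟨x, hx⟩ : S) ∈ S.attach.toList := S.attach.mem_toList.mpr (S.mem_attach _)
  exact List.mem_map_of_mem (f := Subtype.val) ((mem_insertionSort rS).mpr hx')

theorem List.exists_isChain_cons_of_isChain_reflTransGen {α : Type*} {r : α → α → Prop} :
    ∀ {a : α} {l : List α}, IsChain (ReflTransGen r) (a :: l) →
      ∃ w, IsChain r (a :: w) ∧ a :: l ⊆ a :: w
  | a, [], _ => ⟨[], .singleton a, Subset.refl _⟩
  | a, b :: l, h => by
    obtain ⟨hab, hbl⟩ := isChain_cons_cons.mp h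
    obtain ⟨p, hp, hpb⟩ := exists_isChain_cons_of_relationReflTransGen hab
    obtain ⟨w, hw, hlw⟩ := exists_isChain_cons_of_isChain_reflTransGen hbl
    refine ⟨p ++ w, ?_, ?_⟩
    · have hw' := isChain_cons.mp hw
      refine (hp.append hw'.2 fun x hx y hy => ?_ : IsChain r ((a :: p) ++ w))
      rw [getLast?_eq_some_getLast (cons_ne_nil a p), hpb, Option.mem_some_iff] at hx
      exact hx ▸ hw'.1 y hy
    · have hb : b ∈ a :: p := hpb ▸ getLast_mem (cons_ne_nil a p)
      intro x hx
      show x ∈ (a :: p) ++ w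
      rcases mem_cons.mp hx with rfl | hx
      · exact mem_append_left w mem_cons_self
      rcases mem_cons.mp (hlw hx) with rfl | hxw
      · exact mem_append_left w hb
      · exact mem_append_right _ hxw

/-- If a nonempty finite set `S` of vertices is pairwise comparable under
the reachability relation (the reflexive-transitive closure of the edge
relation `A`), then there is a single directed walk (a nonempty list whose
consecutive entries are related by `A`) containing every vertex of `S`. -/
theorem finset_reach_clique_exists_covering_walk
    {V : Type*} (A : V → V → Prop) (S : Finset V) (hne : S.Nonempty)
    (hS : ∀ u ∈ S, ∀ v ∈ S,
      Relation.ReflTransGen A u v ∨ Relation.ReflTransGen A v u) :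
    ∃ l : List V, l ≠ [] ∧ l.Chain' A ∧ ∀ x ∈ S, x ∈ l := by
  obtain ⟨l, hl, hSl⟩ := S.exists_list_pairwise_of_total hS
  obtain ⟨a, t, rfl⟩ : ∃ a t, l = a :: t := by
    obtain ⟨x, hx⟩ := hne
    exact exists_cons_of_ne_nil (ne_nil_of_mem (hSl x hx))
  obtain ⟨w, hw, htw⟩ := exists_isChain_cons_of_isChain_reflTransGen hl.isChain
  exact ⟨a :: w, cons_ne_nil a w, hw, fun x hx => htw (hSl x hx)⟩
end

section
/- Let V be a type, A : V → V → Prop a directed edge relation, and reach the reflexive-transitive closure of A. For every nonempty finite subset S of V, the following are equivalent: (i) every pair of vertices u, v ∈ S satisfies reach u v or reach v u (S is a clique in the undirected reachability graph), and (ii) there exists a directed walk in the graph, i.e., a nonempty list of vertices whose consecutive entries are related by A, that contains every vertex of S. -/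
/-!
Sorting the members of `S` by reachability (a total preorder on `S` by hypothesis) gives a list
whose consecutive entries are joined by walks; concatenating these walks yields one walk through
all of `S`. Conversely, any two vertices on a walk are joined by the segment of the walk between
them.
-/

open Relation

theorem Finset.exists_pairwise_list_of_total {α : Type*} {R : α → α → Prop} [IsTrans α R]
    (s : Finset α) (h : ∀ a ∈ s, ∀ b ∈ s, R a b ∨ R b a) :
    ∃ l : List α, l.Pairwise R ∧ ∀ x, x ∈ l ↔ x ∈ s := by
  classical
  let R' : s → s → Prop := fun a b => R a b
  have : Std.Total R' := ⟨fun a b => h a a.2 b b.2⟩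
  have : IsTrans s R' := ⟨fun _ _ _ => _root_.trans (r := R)⟩
  refine ⟨(s.attach.toList.insertionSort R').map Subtype.val,
    List.pairwise_map.2 (List.pairwise_insertionSort R' _), fun x => ?_⟩
  simp [List.mem_insertionSort]

theorem List.Pairwise.rel_or_rel_of_mem {α : Type*} {R : α → α → Prop} [Std.Refl R] {l : List α}
    (h : l.Pairwise R) {a b : α} (ha : a ∈ l) (hb : b ∈ l) : R a b ∨ R b a := by
  induction h with
  | nil => simp at ha
  | @cons c l hc _ ih =>
    rcases mem_cons.1 ha with rfl | ha' <;> rcases mem_cons.1 hb with rfl | hb'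
    · exact .inl (refl _)
    · exact .inl (hc b hb')
    · exact .inr (hc a ha')
    · exact ih ha' hb'

theorem List.IsChain.exists_isChain_cons_subset_of_reflTransGen {α : Type*} {r : α → α → Prop}
    {a : α} {l : List α} (h : (a :: l).IsChain (ReflTransGen r)) :
    ∃ m, (a :: m).IsChain r ∧ a :: l ⊆ a :: m := by
  induction l generalizing a with
  | nil => exact ⟨[], .singleton a, Subset.refl _⟩
  | cons b t ih =>
    obtain ⟨hab, hbt⟩ := isChain_cons_cons.1 h
    obtain ⟨c, hc, hlast⟩ := exists_isChain_cons_of_relationReflTransGen hab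
    obtain ⟨m, hm, hsub⟩ := ih hbt
    have hb : b ∈ a :: c := hlast ▸ getLast_mem _
    refine ⟨c ++ m, ?_, ?_⟩
    · rw [← cons_append]
      refine hc.append hm.tail fun x hx y hy => ?_
      rw [getLast?_eq_some_getLast (cons_ne_nil a c), hlast, Option.mem_some_iff] at hx
      exact hx ▸ hm.rel_head? hy
    · have hcm : a :: c ⊆ a :: (c ++ m) := cons_subset_cons a (subset_append_left c m)
      have hmm : m ⊆ a :: (c ++ m) :=
        List.Subset.trans (subset_append_right c m) (subset_cons_self a _)
      exact cons_subset.2 ⟨mem_cons_self, List.Subset.trans hsub (cons_subset.2 ⟨hcm hb, hmm⟩)⟩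

/-- For a nonempty finite vertex set `S`, `S` is a clique of the undirected
reachability graph (every two members are comparable under the
reflexive-transitive closure of the edge relation `A`) if and only if there
is a single directed walk — a nonempty list whose consecutive entries are
related by `A` — containing every vertex of `S`. -/
theorem reach_clique_iff_exists_covering_walk
    {V : Type*} (A : V → V → Prop) (S : Finset V) (hne : S.Nonempty) :
    (∀ u ∈ S, ∀ v ∈ S,
        Relation.ReflTransGen A u v ∨ Relation.ReflTransGen A v u) ↔
      ∃ l : List V, l ≠ [] ∧ l.Chain' A ∧ ∀ x ∈ S, x ∈ l := by
  constructor
  · intro hS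
    obtain ⟨l, hl, hlS⟩ := S.exists_pairwise_list_of_total hS
    obtain ⟨x, hx⟩ := hne
    obtain ⟨a, t, rfl⟩ := List.exists_cons_of_ne_nil (List.ne_nil_of_mem ((hlS x).2 hx))
    obtain ⟨m, hm, hsub⟩ := hl.isChain.exists_isChain_cons_subset_of_reflTransGen
    exact ⟨a :: m, List.cons_ne_nil a m, hm, fun y hy => hsub ((hlS y).2 hy)⟩
  · rintro ⟨l, -, hl, hSl⟩ u hu v hv
    exact (hl.imp fun _ _ => ReflTransGen.single).pairwise.rel_or_rel_of_mem (hSl u hu) (hSl v hv)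
end
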